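/- arXiv:2002.12027 — 2 statements merged into one kernel-verified Lean document; each statement's English description precedes it below -/
import Mathlib

section
/- Let T be a finite plane tree with n vertices, let v₀, v₁, …, v_{n−1} be its vertices listed in lexicographical (depth-first) order, and define the Lukasiewicz path by W₀ = 0 and W_{i+1} = W_i + k_{v_i} − 1 for 0 ≤ i ≤ n−1, where k_v is the number of children of v. Then W_n = −1 and W_i ≥ 0 for all 0 ≤ i ≤ n−1. -/
/-!
Call a word `L` over `ℕ` Łukasiewicz if `L.sum + 1 = L.length` and every proper prefix of length
`j` has sum at least `j`; its walk `(L.take j).sum - j` then stays nonnegative before its last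
step and ends at `-1`. The outdegree word of a node with subtrees `t₁, …, t_k` is
`k :: L₁ ++ ⋯ ++ L_k`: the first letter lifts the walk to height `k - 1`, and each block `Lᵢ` is
an excursion that lowers it by exactly one, so the height stays `≥ 0` until the end of `L_k`.
By induction every outdegree word is Łukasiewicz, and the path `W` is its walk.
-/

/-- A plane tree: a root together with an ordered (finite) list of subtrees. -/
inductive PlaneTree : Type
  | node : List PlaneTree → PlaneTree

namespace PlaneTree

/-- The list of outdegrees (numbers of children) of the vertices of a plane tree,
in lexicographical (depth-first, left-to-right) order. -/
def degList : PlaneTree → List ℕ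
  | node ts => ts.length :: (ts.attach.map (fun ⟨t, _⟩ => degList t)).flatten

end PlaneTree

@[simp]
lemma PlaneTree.degList_node (ts : List PlaneTree) :
    degList (node ts) = ts.length :: (ts.map degList).flatten := by
  simp [degList]

def IsLukasiewicz (L : List ℕ) : Prop :=
  L.sum + 1 = L.length ∧ ∀ j < L.length, j ≤ (L.take j).sum

namespace IsLukasiewicz

lemma sum_flatten_add_length {Ls : List (List ℕ)} (h : ∀ L ∈ Ls, IsLukasiewicz L) :
    Ls.flatten.sum + Ls.length = Ls.flatten.length := by
  induction Ls with
  | nil => simp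
  | cons L Ls ih =>
    have hL := (h L (by simp)).1
    have := ih fun M hM => h M (by simp [hM])
    simp only [List.flatten_cons, List.sum_append, List.length_append, List.length_cons]
    omega

lemma le_sum_take_flatten_add_length {Ls : List (List ℕ)} (h : ∀ L ∈ Ls, IsLukasiewicz L) :
    ∀ j < Ls.flatten.length, j + 1 ≤ (Ls.flatten.take j).sum + Ls.length := by
  induction Ls with
  | nil => simp
  | cons L Ls ih =>
    intro j hj
    obtain ⟨hLsum, hLprefix⟩ := h L (by simp)
    rw [List.flatten_cons, List.length_cons] at *
    rw [List.length_append] at hj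
    by_cases hjL : j < L.length
    · rw [List.take_append_of_le_length hjL.le]
      have := hLprefix j hjL
      omega
    · obtain ⟨i, rfl⟩ : ∃ i, j = L.length + i := ⟨j - L.length, by omega⟩
      have := ih (fun M hM => h M (by simp [hM])) i (by omega)
      rw [List.take_append, List.sum_append, List.take_of_length_le (by omega),
        Nat.add_sub_cancel_left]
      omega

lemma cons_length_flatten {Ls : List (List ℕ)} (h : ∀ L ∈ Ls, IsLukasiewicz L) :
    IsLukasiewicz (Ls.length :: Ls.flatten) := by
  refine ⟨?_, fun j hj => ?_⟩
  · simp only [List.sum_cons, List.length_cons]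
    have := sum_flatten_add_length h
    omega
  · rcases j with _ | j
    · simp
    · rw [List.length_cons] at hj
      rw [List.take_succ_cons, List.sum_cons]
      have := le_sum_take_flatten_add_length h j (by omega)
      omega

end IsLukasiewicz

theorem PlaneTree.isLukasiewicz_degList : ∀ t : PlaneTree, IsLukasiewicz t.degList
  | node ts => by
    rw [degList_node, ← List.length_map (f := degList)]
    refine IsLukasiewicz.cons_length_flatten fun L hL => ?_
    obtain ⟨t, -, rfl⟩ := List.mem_map.mp hL
    exact isLukasiewicz_degList t

lemma eq_sum_take_sub_of_forall_succ {L : List ℕ} {W : ℕ → ℤ} (hW0 : W 0 = 0)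
    (hWrec : ∀ i (h : i < L.length), W (i + 1) = W i + ((L.get ⟨i, h⟩ : ℕ) : ℤ) - 1) :
    ∀ i ≤ L.length, W i = ((L.take i).sum : ℤ) - i := by
  intro i hi
  induction i with
  | zero => simpa using hW0
  | succ i ih =>
    rw [hWrec i hi, ih (Nat.le_of_succ_le hi), List.sum_take_succ _ _ hi]
    push_cast
    simp only [List.get_eq_getElem]
    ring

/-- The Lukasiewicz path of a plane tree: if `v₀, …, v_{n-1}` are the vertices in
lexicographical order, `W₀ = 0` and `W_{i+1} = W_i + k_{v_i} - 1`, then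
`W_n = -1` and `W_i ≥ 0` for all `0 ≤ i ≤ n - 1`. -/
theorem stmt_5 (T : PlaneTree) (W : ℕ → ℤ) (hW0 : W 0 = 0)
    (hWrec : ∀ i (h : i < (PlaneTree.degList T).length),
      W (i + 1) = W i + (((PlaneTree.degList T).get ⟨i, h⟩ : ℕ) : ℤ) - 1) :
    W (PlaneTree.degList T).length = -1 ∧
    ∀ i < (PlaneTree.degList T).length, 0 ≤ W i := by
  have hW := eq_sum_take_sub_of_forall_succ hW0 hWrec
  obtain ⟨hsum, hprefix⟩ := T.isLukasiewicz_degList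
  refine ⟨?_, fun i hi => ?_⟩
  · rw [hW _ le_rfl, List.take_length]
    omega
  · rw [hW i hi.le]
    have := hprefix i hi
    omega
end

section
/- Let w be a weight sequence with w_0 > 0, let s > 0 with F_w(s) < ∞ and s F_w'(s) = 1, and suppose μ is the critical probability distribution with generating function F_μ(x) = e^{F_w(sx) − F_w(s)}. If μ has finite variance σ_μ², then σ_μ² = s² F_w''(s) + 1; in particular σ_μ² ≥ 1. -/
/-!
Put `a i = w i * s ^ i`, `G = F_a` and `M = F_μ`, so that `M = exp (G - G 1)` on `[0, 1]`.
Then `G' = M' / M` on `(0, 1)`, hence `G'' = (M'' M - M'²) / M²`, which tends to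
`E[X(X-1)] - 1 = σ² - 1` as `x → 1⁻` because `μ` has mean `1` and finite variance.
Since `G'` has nonnegative coefficients, its polynomial truncations grow more slowly than `G'`
itself, so the partial sums `∑_{i<N} i(i-1) a_i` are bounded by that limit; hence
`s² F_w''(s) = ∑ i(i-1) a_i` is finite, and by Abel's theorem it equals `σ² - 1 ≥ 0`.
-/

open Set Filter Topology

noncomputable def genFun (c : ℕ → ℝ) (x : ℝ) : ℝ := ∑' i, c i * x ^ i

def derivCoeff (c : ℕ → ℝ) : ℕ → ℝ := fun i => (i + 1) * c (i + 1)

lemma derivCoeff_nonneg {c : ℕ → ℝ} (hc : 0 ≤ c) : 0 ≤ derivCoeff c :=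
  fun i => mul_nonneg (by positivity) (hc _)

lemma natCast_mul_natCast_sub_one_nonneg (i : ℕ) : 0 ≤ (i : ℝ) * ((i : ℝ) - 1) := by
  rcases i with _ | i
  · simp
  · push_cast
    nlinarith

lemma hasSum_derivCoeff_iff {c : ℕ → ℝ} {L : ℝ} :
    HasSum (derivCoeff c) L ↔ HasSum (fun i : ℕ => (i : ℝ) * c i) L := by
  rw [← hasSum_nat_add_iff' 1 (f := fun i : ℕ => (i : ℝ) * c i)]
  unfold derivCoeff
  simp

lemma hasSum_derivCoeff_derivCoeff_iff {c : ℕ → ℝ} {L : ℝ} :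
    HasSum (derivCoeff (derivCoeff c)) L ↔
      HasSum (fun i : ℕ => (i : ℝ) * ((i : ℝ) - 1) * c i) L := by
  rw [← hasSum_nat_add_iff' 2 (f := fun i : ℕ => (i : ℝ) * ((i : ℝ) - 1) * c i)]
  unfold derivCoeff
  norm_num [Finset.sum_range_succ]
  congr! 2 with i
  ring

lemma norm_mul_pow_le_abs {c x : ℝ} (hx : |x| ≤ 1) (i : ℕ) : ‖c * x ^ i‖ ≤ |c| := by
  rw [norm_mul, norm_pow, Real.norm_eq_abs, Real.norm_eq_abs]
  exact mul_le_of_le_one_right (abs_nonneg c) (pow_le_one₀ (abs_nonneg x) hx)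

lemma summable_mul_pow {c : ℕ → ℝ} (hc : Summable c) {x : ℝ} (hx : |x| ≤ 1) :
    Summable fun i => c i * x ^ i :=
  .of_norm_bounded hc.abs fun i => norm_mul_pow_le_abs hx i

lemma continuousOn_genFun {c : ℕ → ℝ} (hc : Summable c) :
    ContinuousOn (genFun c) (Icc (-1) 1) :=
  continuousOn_tsum (fun i => (continuous_const.mul (continuous_pow i)).continuousOn) hc.abs
    fun i _ hx => norm_mul_pow_le_abs (abs_le.2 hx) i

lemma tendsto_genFun_one {c : ℕ → ℝ} (hc : Summable c) :
    Tendsto (genFun c) (𝓝[<] 1) (𝓝 (∑' i, c i)) := by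
  have h := (continuousOn_genFun hc 1 ⟨by norm_num, le_rfl⟩).tendsto
  simpa [genFun] using h.mono_left (nhdsWithin_le_of_mem (Icc_mem_nhdsLT (by norm_num)))

lemma hasDerivAt_genFun {c : ℕ → ℝ} (hc : Summable (derivCoeff c)) {x : ℝ}
    (hx : x ∈ Ioo (-1) 1) : HasDerivAt (genFun c) (genFun (derivCoeff c) x) x := by
  have hc' : Summable fun i : ℕ => |(i : ℝ) * c i| :=
    (hasSum_derivCoeff_iff.mp hc.hasSum).summable.abs
  have hbound : ∀ (i : ℕ), ∀ y ∈ Ioo (-1 : ℝ) 1,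
      ‖(i : ℝ) * c i * y ^ (i - 1)‖ ≤ |(i : ℝ) * c i| :=
    fun i y hy => norm_mul_pow_le_abs (abs_le.2 ⟨hy.1.le, hy.2.le⟩) _
  have h0 : Summable fun i => c i * (0 : ℝ) ^ i :=
    (hasSum_single 0 fun i hi => by simp [hi]).summable
  have key := hasDerivAt_tsum_of_isPreconnected hc' isOpen_Ioo
    (convex_Ioo (-1 : ℝ) 1).isPreconnected
    (fun (i : ℕ) y _ => ((hasDerivAt_pow i y).const_mul (c i)).congr_deriv (by ring)) hbound
    ⟨by norm_num, by norm_num⟩ h0 hx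
  have hshift : ∑' i : ℕ, (i : ℝ) * c i * x ^ (i - 1) = genFun (derivCoeff c) x := by
    rw [Summable.tsum_eq_zero_add (.of_norm_bounded hc' fun i => hbound i x hx)]
    simp [genFun, derivCoeff]
  exact hshift ▸ key

lemma sum_range_derivCoeff_mul_pow_le {d : ℕ → ℝ} (hd : 0 ≤ d) (hds : Summable d) {x f' : ℝ}
    (hx : x ∈ Ioo 0 1) (hf : HasDerivAt (genFun d) f' x) (N : ℕ) :
    ∑ i ∈ Finset.range N, derivCoeff d i * x ^ i ≤ f' := by
  set P : ℝ → ℝ := fun y => ∑ i ∈ Finset.range (N + 1), d i * y ^ i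
  have hP : HasDerivAt P (∑ i ∈ Finset.range N, derivCoeff d i * x ^ i) x := by
    have h := HasDerivAt.fun_sum (u := Finset.range (N + 1))
      fun i _ => (hasDerivAt_pow i x).const_mul (d i)
    rw [Finset.sum_range_succ'] at h
    simpa [derivCoeff, mul_comm, mul_left_comm, mul_assoc] using h
  have hsummable : ∀ y ∈ Ioo (0 : ℝ) 1, Summable fun i => d i * y ^ i := fun y hy =>
    summable_mul_pow hds (abs_le.2 ⟨by linarith [hy.1], hy.2.le⟩)
  have htail : ∀ y ∈ Ioo (0 : ℝ) 1,
      genFun d y - P y = ∑' i, d (i + (N + 1)) * y ^ (i + (N + 1)) := fun y hy => by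
    rw [genFun, ← (hsummable y hy).sum_add_tsum_nat_add (N + 1)]
    ring
  -- `genFun d - P` is a power series with nonnegative coefficients, hence monotone on `(0, 1)`.
  have hmono : MonotoneOn (fun y => genFun d y - P y) (Ioo 0 1) := fun y hy z hz hyz => by
    simp only [htail y hy, htail z hz]
    exact Summable.tsum_le_tsum
      (fun i => mul_le_mul_of_nonneg_left (pow_le_pow_left₀ hy.1.le hyz _) (hd _))
      ((summable_nat_add_iff (f := fun i => d i * y ^ i) (N + 1)).mpr (hsummable y hy))
      ((summable_nat_add_iff (f := fun i => d i * z ^ i) (N + 1)).mpr (hsummable z hz))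
  have := (hf.sub hP).hasDerivWithinAt.nonneg_of_monotoneOn (isOpen_Ioo.preperfect x hx) hmono
  linarith

theorem hasSum_derivCoeff_of_tendsto {d : ℕ → ℝ} (hd : 0 ≤ d) (hds : Summable d)
    {f' : ℝ → ℝ} {L : ℝ} (hf : ∀ x ∈ Ioo 0 1, HasDerivAt (genFun d) (f' x) x)
    (hL : Tendsto f' (𝓝[<] 1) (𝓝 L)) : HasSum (derivCoeff d) L := by
  have hIoo : Ioo (0 : ℝ) 1 ∈ 𝓝[<] 1 := Ioo_mem_nhdsLT one_pos
  have hsummable : Summable (derivCoeff d) := by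
    refine summable_of_sum_range_le (c := L) (derivCoeff_nonneg hd) fun N => ?_
    have hpoly : Tendsto (fun x => ∑ i ∈ Finset.range N, derivCoeff d i * x ^ i) (𝓝[<] 1)
        (𝓝 (∑ i ∈ Finset.range N, derivCoeff d i)) := by
      have h : Continuous fun x : ℝ => ∑ i ∈ Finset.range N, derivCoeff d i * x ^ i := by
        fun_prop
      simpa using (h.tendsto 1).mono_left nhdsWithin_le_nhds
    exact le_of_tendsto_of_tendsto hpoly hL <| eventually_of_mem hIoo fun x hx =>
      sum_range_derivCoeff_mul_pow_le hd hds hx (hf x hx) N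
  have hf' : f' =ᶠ[𝓝[<] 1] genFun (derivCoeff d) := eventually_of_mem hIoo fun x hx =>
    (hf x hx).unique (hasDerivAt_genFun hsummable ⟨by linarith [hx.1], hx.2⟩)
  rw [tendsto_nhds_unique (hL.congr' hf') (tendsto_genFun_one hsummable)]
  exact hsummable.hasSum

theorem hasSum_derivCoeff_derivCoeff_of_eq_exp {a μ : ℕ → ℝ} {c m V : ℝ} (ha : 0 ≤ a)
    (ha1 : Summable (derivCoeff a)) (hμ : HasSum μ 1) (hμ1 : HasSum (derivCoeff μ) m)
    (hμ2 : HasSum (derivCoeff (derivCoeff μ)) V)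
    (hexp : ∀ x ∈ Ioo 0 1, genFun μ x = Real.exp (genFun a x - c)) :
    HasSum (derivCoeff (derivCoeff a)) (V - m ^ 2) := by
  have hIoo : ∀ x ∈ Ioo (0 : ℝ) 1, x ∈ Ioo (-1 : ℝ) 1 := fun x hx => ⟨by linarith [hx.1], hx.2⟩
  have hpos : ∀ x ∈ Ioo (0 : ℝ) 1, genFun μ x ≠ 0 := fun x hx => (hexp x hx ▸ Real.exp_pos _).ne'
  have hlog : ∀ x ∈ Ioo (0 : ℝ) 1,
      genFun (derivCoeff a) x = (genFun (derivCoeff μ) / genFun μ) x := by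
    intro x hx
    have hE : HasDerivAt (genFun μ) (Real.exp (genFun a x - c) * genFun (derivCoeff a) x) x :=
      ((hasDerivAt_genFun ha1 (hIoo x hx)).sub_const c).exp.congr_of_eventuallyEq
        (eventually_of_mem (isOpen_Ioo.mem_nhds hx) hexp)
    rw [Pi.div_apply, (hasDerivAt_genFun hμ1.summable (hIoo x hx)).unique hE, ← hexp x hx,
      mul_div_cancel_left₀ _ (hpos x hx)]
  refine hasSum_derivCoeff_of_tendsto (derivCoeff_nonneg ha) ha1
    (f' := fun x => (genFun (derivCoeff (derivCoeff μ)) x * genFun μ x -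
      genFun (derivCoeff μ) x * genFun (derivCoeff μ) x) / genFun μ x ^ 2) (fun x hx => ?_) ?_
  · exact ((hasDerivAt_genFun hμ2.summable (hIoo x hx)).div
      (hasDerivAt_genFun hμ1.summable (hIoo x hx)) (hpos x hx)).congr_of_eventuallyEq
      (eventually_of_mem (isOpen_Ioo.mem_nhds hx) hlog)
  · have h := (((tendsto_genFun_one hμ2.summable).mul (tendsto_genFun_one hμ.summable)).sub
      ((tendsto_genFun_one hμ1.summable).mul (tendsto_genFun_one hμ1.summable))).div
      ((tendsto_genFun_one hμ.summable).pow 2) (by simp [hμ.tsum_eq])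
    rw [hμ.tsum_eq, hμ1.tsum_eq, hμ2.tsum_eq] at h
    exact (show (V * 1 - m * m) / 1 ^ 2 = V - m ^ 2 by ring) ▸ h

theorem stmt_13_general (w : ℕ → ℝ) (hwnn : ∀ i, 0 ≤ w i)
    (s : ℝ) (hs : 0 < s)
    (hmean : Summable fun i : ℕ => (i : ℝ) * w i * s ^ i)
    (hcrit : ∑' i : ℕ, (i : ℝ) * w i * s ^ i = 1)
    (μ : ℕ → ℝ) (hμnn : ∀ i, 0 ≤ μ i) (hμs : Summable μ) (hμ1 : ∑' i, μ i = 1)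
    (hμm : Summable fun i : ℕ => (i : ℝ) * μ i) (hμcrit : ∑' i : ℕ, (i : ℝ) * μ i = 1)
    (hgen : ∀ x ∈ Set.Icc (0 : ℝ) 1,
      ∑' i : ℕ, μ i * x ^ i = Real.exp ((∑' i : ℕ, w i * (s * x) ^ i) - ∑' i : ℕ, w i * s ^ i))
    (hvar : Summable fun i : ℕ => (i : ℝ) ^ 2 * μ i) :
    Summable (fun i : ℕ => (i : ℝ) * ((i : ℝ) - 1) * w i * s ^ i) ∧
    (∑' i : ℕ, (i : ℝ) ^ 2 * μ i) - 1
      = (∑' i : ℕ, (i : ℝ) * ((i : ℝ) - 1) * w i * s ^ i) + 1 ∧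
    1 ≤ (∑' i : ℕ, (i : ℝ) ^ 2 * μ i) - 1 := by
  set a : ℕ → ℝ := fun i => w i * s ^ i
  have hexp : ∀ x ∈ Ioo (0 : ℝ) 1, genFun μ x = Real.exp (genFun a x - genFun a 1) :=
    fun x hx => by simpa [genFun, a, mul_pow, mul_assoc] using hgen x (Ioo_subset_Icc_self hx)
  have ha1 : HasSum (derivCoeff a) 1 := by
    rw [hasSum_derivCoeff_iff, ← hcrit]
    simpa only [mul_assoc] using hmean.hasSum
  have hμfact : Summable fun i : ℕ => (i : ℝ) * ((i : ℝ) - 1) * μ i :=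
    hvar.of_nonneg_of_le (fun i => mul_nonneg (natCast_mul_natCast_sub_one_nonneg i) (hμnn i))
      fun i => mul_le_mul_of_nonneg_right (by nlinarith) (hμnn i)
  have hS := hasSum_derivCoeff_derivCoeff_of_eq_exp
    (fun i => mul_nonneg (hwnn i) (pow_nonneg hs.le i)) ha1.summable (hμ1 ▸ hμs.hasSum)
    (hasSum_derivCoeff_iff.mpr (hμcrit ▸ hμm.hasSum))
    (hasSum_derivCoeff_derivCoeff_iff.mpr hμfact.hasSum) hexp
  rw [hasSum_derivCoeff_derivCoeff_iff, one_pow] at hS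
  simp only [← mul_assoc] at hS
  have hsq : HasSum (fun i : ℕ => (i : ℝ) ^ 2 * μ i)
      (∑' i : ℕ, (i : ℝ) * ((i : ℝ) - 1) * μ i + 1) := by
    convert hμfact.hasSum.add (hμcrit ▸ hμm.hasSum) using 1
    funext i
    ring
  refine ⟨hS.summable, by rw [hsq.tsum_eq, hS.tsum_eq]; ring, ?_⟩
  rw [hsq.tsum_eq]
  have hS0 := hS.nonneg fun i =>
    mul_nonneg (mul_nonneg (natCast_mul_natCast_sub_one_nonneg i) (hwnn i)) (pow_nonneg hs.le i)
  linarith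

/-- If `w` is a weight sequence with `w₀ > 0`, `s > 0` with `F_w(s) < ∞` and
`s F_w'(s) = 1`, and `μ` is the critical probability distribution with generating
function `F_μ(x) = exp (F_w(sx) - F_w(s))`, then, if `μ` has finite variance `σ_μ²`,
`σ_μ² = s² F_w''(s) + 1`; in particular `σ_μ² ≥ 1`. -/
theorem stmt_13 (w : ℕ → ℝ) (hwnn : ∀ i, 0 ≤ w i) (hw0 : 0 < w 0)
    (s : ℝ) (hs : 0 < s)
    (hsum : Summable fun i : ℕ => w i * s ^ i)
    (hmean : Summable fun i : ℕ => (i : ℝ) * w i * s ^ i)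
    (hcrit : ∑' i : ℕ, (i : ℝ) * w i * s ^ i = 1)
    (μ : ℕ → ℝ) (hμnn : ∀ i, 0 ≤ μ i) (hμs : Summable μ) (hμ1 : ∑' i, μ i = 1)
    (hμm : Summable fun i : ℕ => (i : ℝ) * μ i) (hμcrit : ∑' i : ℕ, (i : ℝ) * μ i = 1)
    (hgen : ∀ x ∈ Set.Icc (0 : ℝ) 1,
      ∑' i : ℕ, μ i * x ^ i = Real.exp ((∑' i : ℕ, w i * (s * x) ^ i) - ∑' i : ℕ, w i * s ^ i))
    (hvar : Summable fun i : ℕ => (i : ℝ) ^ 2 * μ i) :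
    Summable (fun i : ℕ => (i : ℝ) * ((i : ℝ) - 1) * w i * s ^ i) ∧
    (∑' i : ℕ, (i : ℝ) ^ 2 * μ i) - 1
      = (∑' i : ℕ, (i : ℝ) * ((i : ℝ) - 1) * w i * s ^ i) + 1 ∧
    1 ≤ (∑' i : ℕ, (i : ℝ) ^ 2 * μ i) - 1 :=
  stmt_13_general w hwnn s hs hmean hcrit μ hμnn hμs hμ1 hμm hμcrit hgen hvar
end
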